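/- arXiv:math/0312427 — 13 statements merged into one kernel-verified Lean document; each statement's English description precedes it below -/
import Mathlib

section
/- Let P be a field and let X be a class of commutative P-algebras given as a family A : κ → Type of commutative P-algebras. For every commutative P-algebra B (in a universe containing that of P and the family) the following are equivalent: (1) every infinitary quasiidentity that holds in all algebras A k also holds in B; (2) every finitely generated P-subalgebra of B admits an injective P-algebra homomorphism into a product ∏ (j : J), A (k j) for some index type J and some k : J → κ. (This is the equality tilde-qVar(X) = LSC(X) for the variety of commutative associative unital P-algebras.) -/
/-!
A quasiidentity passes from the algebras `A k` to their products and from an algebra to its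
subalgebras, and it holds in `B` as soon as it holds in every finitely generated subalgebra,
because a point `μ : Fin n → B` lies in the subalgebra it generates; this gives (2) ⇒ (1).
Conversely, present a finitely generated `S ≤ B` as `MvPolynomial (Fin n) P ⧸ I`. For `f ∉ I`
the quasiidentity with premises `I` and conclusion `f` fails in `B` at the generators of `S`,
so by (1) it fails in some `A k`, at a point whose evaluation map kills `I` but not `f`.
The product of these evaluation maps has kernel exactly `I`, so it embeds `S` into a product
of the `A k`.
-/

open MvPolynomial

universe u v w

section QuasiIdentity

variable {P : Type*} [CommSemiring P] {σ : Type*}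

def SatisfiesQuasiIdentity (R : Type*) [CommSemiring R] [Algebra P R]
    (T : Set (MvPolynomial σ P)) (f : MvPolynomial σ P) : Prop :=
  ∀ μ : σ → R, (∀ g ∈ T, aeval μ g = 0) → aeval μ f = 0

variable {T : Set (MvPolynomial σ P)} {f : MvPolynomial σ P}

theorem SatisfiesQuasiIdentity.of_injective {R S : Type*} [CommSemiring R] [Algebra P R]
    [CommSemiring S] [Algebra P S] (φ : R →ₐ[P] S) (hφ : Function.Injective φ)
    (h : SatisfiesQuasiIdentity S T f) : SatisfiesQuasiIdentity R T f := by
  intro μ hμ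
  apply hφ
  rw [map_zero, comp_aeval_apply]
  exact h _ fun g hg => by rw [← comp_aeval_apply, hμ g hg, map_zero]

theorem SatisfiesQuasiIdentity.pi {ι : Type*} {R : ι → Type*} [∀ i, CommSemiring (R i)]
    [∀ i, Algebra P (R i)] (h : ∀ i, SatisfiesQuasiIdentity (R i) T f) :
    SatisfiesQuasiIdentity (∀ i, R i) T f := by
  intro μ hμ
  funext i
  have heval : ∀ p : MvPolynomial σ P, aeval μ p i = aeval (fun j => μ j i) p :=
    comp_aeval_apply μ (Pi.evalAlgHom P R i)
  rw [heval, Pi.zero_apply]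
  exact h i _ fun g hg => by rw [← heval, hμ g hg, Pi.zero_apply]

theorem SatisfiesQuasiIdentity.of_forall_fg [Finite σ] {B : Type*} [CommSemiring B]
    [Algebra P B] (h : ∀ S : Subalgebra P B, S.FG → SatisfiesQuasiIdentity S T f) :
    SatisfiesQuasiIdentity B T f := by
  intro μ hμ
  let S := Algebra.adjoin P (Set.range μ)
  let μS : σ → S := fun i => ⟨μ i, Algebra.subset_adjoin ⟨i, rfl⟩⟩
  have hval : ∀ p : MvPolynomial σ P, aeval μ p = S.val (aeval μS p) :=
    fun p => (comp_aeval_apply μS S.val p).symm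
  have hS : S.FG := Subalgebra.fg_def.2 ⟨_, Set.finite_range μ, rfl⟩
  rw [hval, h S hS μS fun g hg =>
    Subtype.ext ((hval g).symm.trans (hμ g hg)), map_zero]

theorem not_satisfiesQuasiIdentity_ker {S : Type*} [CommRing S] [Algebra P S]
    (π : MvPolynomial σ P →ₐ[P] S) (hf : f ∉ RingHom.ker π) :
    ¬ SatisfiesQuasiIdentity S (RingHom.ker π) f := fun h =>
  hf <| by
    rw [RingHom.mem_ker, aeval_unique π]
    exact h _ fun g hg => by rwa [← aeval_unique π]

end QuasiIdentity

section Embedding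

variable {P : Type*} [CommRing P] {S : Type*} [CommRing S] [Algebra P S]

theorem exists_injective_of_surjective_of_ker_eq {R C : Type*} [CommRing R] [Algebra P R]
    [CommRing C] [Algebra P C] (π : R →ₐ[P] S)
    (hπ : Function.Surjective π) (G : R →ₐ[P] C) (h : RingHom.ker π = RingHom.ker G) :
    ∃ g : S →ₐ[P] C, Function.Injective g :=
  let e := (Ideal.quotientKerAlgEquivOfSurjective hπ).symm.trans (Ideal.quotientEquivAlgOfEq P h)
  ⟨(Ideal.kerLiftAlg G).comp e.toAlgHom,
    fun _ _ hab => e.injective (Ideal.kerLiftAlg_injective G hab)⟩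

theorem exists_injective_pi_of_separating.{x, y, z} {κ : Type y} {A : κ → Type z}
    [∀ k, CommRing (A k)] [∀ k, Algebra P (A k)] {R : Type x} [CommRing R] [Algebra P R]
    (π : R →ₐ[P] S) (hπ : Function.Surjective π)
    (h : ∀ r ∉ RingHom.ker π, ∃ (k : κ) (φ : R →ₐ[P] A k),
      RingHom.ker π ≤ RingHom.ker φ ∧ φ r ≠ 0) :
    ∃ (J : Type (max x y z)) (k : J → κ) (g : S →ₐ[P] ((j : J) → A (k j))),
      Function.Injective g := by
  choose k φ hker hr using h
  let J := ULift.{max y z} {r // r ∉ RingHom.ker π}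
  let G : R →ₐ[P] ((j : J) → A (k _ j.down.2)) := AlgHom.pi fun j => φ _ j.down.2
  have hG : RingHom.ker π = RingHom.ker G := by
    ext r
    refine ⟨fun hrπ => funext fun j => hker _ j.down.2 hrπ, fun hrG => ?_⟩
    by_contra hrπ
    exact hr r hrπ (congrFun hrG ⟨⟨r, hrπ⟩⟩)
  obtain ⟨g, hg⟩ := exists_injective_of_surjective_of_ker_eq π hπ G hG
  exact ⟨J, fun j => k _ j.down.2, g, hg⟩

end Embedding

/-- tilde-qVar(X) = LSC(X) for the variety of commutative associative
unital P-algebras: B satisfies every infinitary quasiidentity of the class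
X = {A k} iff every finitely generated P-subalgebra of B embeds into a product
of members of X. -/
theorem tilde_qVar_eq_LSC (P : Type u) [Field P] {κ : Type v} (A : κ → Type w)
    [∀ k, CommRing (A k)] [∀ k, Algebra P (A k)]
    (B : Type (max u v w)) [CommRing B] [Algebra P B] :
    (∀ (n : ℕ) (T : Set (MvPolynomial (Fin n) P)) (f : MvPolynomial (Fin n) P),
        (∀ (k : κ) (μ : Fin n → A k),
            (∀ g ∈ T, aeval μ g = 0) → aeval μ f = 0) →
        ∀ μ : Fin n → B, (∀ g ∈ T, aeval μ g = 0) → aeval μ f = 0)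
      ↔
    (∀ S : Subalgebra P B, S.FG →
        ∃ (J : Type (max u v w)) (k : J → κ)
          (g : S →ₐ[P] ((j : J) → A (k j))), Function.Injective g) := by
  constructor
  · intro hqi S hS
    obtain ⟨n, π, hπ⟩ :=
      Algebra.FiniteType.iff_quotient_mvPolynomial''.1 (S.fg_iff_finiteType.1 hS)
    refine exists_injective_pi_of_separating π hπ fun f hf => ?_
    have hfails : ¬ SatisfiesQuasiIdentity B (RingHom.ker π) f := fun hB =>
      not_satisfiesQuasiIdentity_ker π hf (hB.of_injective S.val Subtype.val_injective)
    have hfailsA : ∃ k, ¬ SatisfiesQuasiIdentity (A k) (RingHom.ker π) f := by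
      by_contra! hall
      exact hfails (hqi n _ f hall)
    obtain ⟨k, μ, hμ, hμf⟩ := by
      simpa only [SatisfiesQuasiIdentity, not_forall] using hfailsA
    exact ⟨k, aeval μ, hμ, hμf⟩
  · intro hlsc n T f hA
    refine SatisfiesQuasiIdentity.of_forall_fg fun S hS => ?_
    obtain ⟨J, k, g, hg⟩ := hlsc S hS
    exact (SatisfiesQuasiIdentity.pi fun j => hA (k j)).of_injective g hg
end

section
/- Let P be a field, X a class of commutative P-algebras given as a family A : κ → Type, n : ℕ, T ⊆ MvPolynomial (Fin n) P, and f ∈ MvPolynomial (Fin n) P. Then f belongs to the intersection of all X-closed ideals of MvPolynomial (Fin n) P containing T (the X-closure of T) if and only if the infinitary quasiidentity with premise set T and conclusion f holds in every algebra A k of the family. -/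
open MvPolynomial

universe u v w

/-- An ideal `I` of the free commutative `P`-algebra of rank `n` is `X`-closed
(for the class `X` given by the family `A`) if the quotient algebra embeds into
a product of members of the family. -/
def IsXClosed (P : Type u) [Field P] {κ : Type v} (A : κ → Type w)
    [∀ k, CommRing (A k)] [∀ k, Algebra P (A k)]
    {n : ℕ} (I : Ideal (MvPolynomial (Fin n) P)) : Prop :=
  ∃ (J : Type (max u v w)) (k : J → κ)
    (g : (MvPolynomial (Fin n) P ⧸ I) →ₐ[P] ((j : J) → A (k j))),
    Function.Injective g

/-
Evaluations at points of `B` are exactly the `P`-algebra maps out of the polynomial algebra, so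
the quasiidentity holds in `B` iff `f` lies in the kernel of every such map whose kernel contains
`T`. Such a kernel is `X`-closed, as the quotient embeds into `B` itself; conversely an `X`-closed
ideal is the intersection of the kernels of the coordinates of its embedding into a product.
-/

theorem MvPolynomial.forall_aeval_eq_zero_iff_forall_algHom {R σ B : Type*} [CommSemiring R]
    [CommSemiring B] [Algebra R B] (T : Set (MvPolynomial σ R)) (f : MvPolynomial σ R) :
    (∀ μ : σ → B, (∀ g ∈ T, aeval μ g = 0) → aeval μ f = 0) ↔
      ∀ φ : MvPolynomial σ R →ₐ[R] B, (∀ g ∈ T, φ g = 0) → φ f = 0 := by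
  refine ⟨fun h φ hφ => ?_, fun h μ => h (aeval μ)⟩
  rw [aeval_unique φ] at hφ ⊢
  exact h _ hφ

theorem Ideal.mem_iff_forall_apply_quotient_mk_eq_zero {S : Type*} [CommRing S] {I : Ideal S}
    {ι : Type*} {B : ι → Type*} [∀ i, Semiring (B i)] (g : S ⧸ I →+* ((i : ι) → B i))
    (hg : Function.Injective g) (f : S) :
    f ∈ I ↔ ∀ i, g (Ideal.Quotient.mk I f) i = 0 := by
  rw [← Ideal.Quotient.eq_zero_iff_mem, ← map_eq_zero_iff g hg, funext_iff]
  rfl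

theorem isXClosed_ker (P : Type u) [Field P] {κ : Type v} (A : κ → Type w)
    [∀ k, CommRing (A k)] [∀ k, Algebra P (A k)] {n : ℕ} {k : κ}
    (φ : MvPolynomial (Fin n) P →ₐ[P] A k) : IsXClosed P A (RingHom.ker φ) :=
  ⟨PUnit, fun _ => k, AlgHom.pi fun _ => Ideal.kerLiftAlg φ,
    fun _ _ h => Ideal.kerLiftAlg_injective φ (congrFun h PUnit.unit)⟩

/-- `f` lies in the `X`-closure of `T` (the intersection of all
`X`-closed ideals containing `T`) iff the infinitary quasiidentity with premise
set `T` and conclusion `f` holds in every algebra `A k` of the class. -/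
theorem mem_XClosure_iff_quasiidentity (P : Type u) [Field P] {κ : Type v}
    (A : κ → Type w) [∀ k, CommRing (A k)] [∀ k, Algebra P (A k)]
    (n : ℕ) (T : Set (MvPolynomial (Fin n) P)) (f : MvPolynomial (Fin n) P) :
    (∀ I : Ideal (MvPolynomial (Fin n) P), IsXClosed P A I → T ⊆ ↑I → f ∈ I)
      ↔
    (∀ (k : κ) (μ : Fin n → A k),
        (∀ g ∈ T, aeval μ g = 0) → aeval μ f = 0) := by
  simp only [forall_aeval_eq_zero_iff_forall_algHom]
  constructor
  · intro h k φ hT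
    exact h _ (isXClosed_ker P A φ) hT
  · rintro h I ⟨J, k, g, hg⟩ hT
    rw [Ideal.mem_iff_forall_apply_quotient_mk_eq_zero g.toRingHom hg]
    intro j
    let φ := (Pi.evalAlgHom P (fun j => A (k j)) j).comp (g.comp (Ideal.Quotient.mkₐ P I))
    refine h (k j) φ fun q hq => ?_
    simp [φ, Ideal.Quotient.eq_zero_iff_mem.mpr (hT hq)]
end

section
/- Let P be a field and let X be a class of commutative P-algebras given as a family A : κ → Type. For every n : ℕ, the intersection of an arbitrary family of X-closed ideals of MvPolynomial (Fin n) P is again an X-closed ideal. -/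
open MvPolynomial

universe u v w x

/-!
`R ⧸ ⨅ i, I i` embeds into `∏ i, R ⧸ I i`, and each factor embeds into a product of members
of `X`; flattening the product of products gives the required embedding. The product is indexed
by the set of ideals `Set.range I` rather than by `ι`, so that the flattened index type stays in
the universe demanded by `IsXClosed`.
-/

open Function

theorem AlgHom.injective_pi_sigma {R B : Type*} [CommSemiring R] [Semiring B] [Algebra R B]
    {ι : Type*} {C : ι → Type*} [∀ i, Semiring (C i)]
    [∀ i, Algebra R (C i)] {J : ι → Type*} {D : (i : ι) → J i → Type*}
    [∀ i j, Semiring (D i j)] [∀ i j, Algebra R (D i j)]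
    (f : ∀ i, B →ₐ[R] C i) (hf : Injective (AlgHom.pi f))
    (g : ∀ i, C i →ₐ[R] ∀ j, D i j) (hg : ∀ i, Injective (g i)) :
    Injective (AlgHom.pi (A := fun p : Σ i, J i => D p.1 p.2)
      fun p => (Pi.evalAlgHom R _ p.2).comp ((g p.1).comp (f p.1))) := by
  intro x y hxy
  apply hf
  funext i
  apply hg i
  funext j
  exact congrFun hxy ⟨i, j⟩

theorem Ideal.Quotient.algHom_pi_factorₐ_injective {R A : Type*} [CommSemiring R] [CommRing A]
    [Algebra R A] {ι : Type*} (I : ι → Ideal A) :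
    Injective (AlgHom.pi fun i => Ideal.Quotient.factorₐ R (iInf_le I i)) := by
  convert Ideal.quotientInfToPiQuotient_inj I
  ext ⟨a⟩ i
  rfl

theorem isXClosed_sInf (P : Type u) [Field P] {κ : Type v} (A : κ → Type w)
    [∀ k, CommRing (A k)] [∀ k, Algebra P (A k)] {n : ℕ}
    {S : Set (Ideal (MvPolynomial (Fin n) P))} (hS : ∀ I ∈ S, IsXClosed P A I) :
    IsXClosed P A (sInf S) := by
  choose J k g hg using fun I : S => hS I I.2
  rw [sInf_eq_iInf']
  exact ⟨Σ I : S, J I, fun p => k p.1 p.2, _,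
    AlgHom.injective_pi_sigma _ (Ideal.Quotient.algHom_pi_factorₐ_injective _) g hg⟩

/-- the intersection of an arbitrary family of `X`-closed ideals of
`MvPolynomial (Fin n) P` is again an `X`-closed ideal. -/
theorem iInf_isXClosed (P : Type u) [Field P] {κ : Type v} (A : κ → Type w)
    [∀ k, CommRing (A k)] [∀ k, Algebra P (A k)] (n : ℕ)
    {ι : Type x} (I : ι → Ideal (MvPolynomial (Fin n) P))
    (hI : ∀ i, IsXClosed P A (I i)) :
    IsXClosed P A (⨅ i, I i) := by
  rw [← sInf_range]
  exact isXClosed_sInf P A (Set.forall_mem_range.2 hI)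
end

section
/- Let P be a field, H a commutative P-algebra, n : ℕ, and I an ideal of MvPolynomial (Fin n) P. Then I is H-closed (i.e., the underlying set of I equals its H-closure I''_H) if and only if there exist an index type J and an injective P-algebra homomorphism from MvPolynomial (Fin n) P ⧸ I into the power algebra J → H. -/
open MvPolynomial

universe u v

/-- The `H`-closure `T''_H` of a set `T` of polynomials: all `f` such that every
point `μ : Fin n → H` annihilating `T` also annihilates `f`. -/
def hClosure (P : Type u) [Field P] (H : Type v) [CommRing H] [Algebra P H]
    (n : ℕ) (T : Set (MvPolynomial (Fin n) P)) : Set (MvPolynomial (Fin n) P) :=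
  {f | ∀ μ : Fin n → H, (∀ g ∈ T, aeval μ g = 0) → aeval μ f = 0}

/-!
A `P`-algebra map `ψ : P[X] → (J → H)` is a family of points `(ψ (X i) j)ᵢ` of `Hⁿ`, one per
`j : J`, and `ψ` is evaluation at them. If `ψ` kills `I`, all these points lie in the zero locus
of `I`, so `ψ` kills the `H`-closure of `I` too; this gives `I''_H ⊆ I` whenever `P[X]/I` embeds
in `J → H`. Conversely, evaluation at all points of the zero locus has kernel exactly `I''_H`,
so it embeds `P[X]/I` in a power of `H` once `I = I''_H`.
-/

universe w

section

variable {P : Type u} [Field P] {H : Type v} [CommRing H] [Algebra P H] {n : ℕ}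

/-- The paper's `T'_H`. -/
def hZeroLocus (P : Type u) [Field P] (H : Type v) [CommRing H] [Algebra P H]
    (n : ℕ) (T : Set (MvPolynomial (Fin n) P)) : Set (Fin n → H) :=
  {μ | ∀ g ∈ T, aeval μ g = 0}

theorem subset_hClosure (T : Set (MvPolynomial (Fin n) P)) : T ⊆ hClosure P H n T :=
  fun f hf _ hμ => hμ f hf

theorem hClosure_subset_ker {J : Type*} (ψ : MvPolynomial (Fin n) P →ₐ[P] (J → H))
    {T : Set (MvPolynomial (Fin n) P)} (hT : T ⊆ RingHom.ker ψ) :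
    hClosure P H n T ⊆ RingHom.ker ψ := by
  have hcoord (p : MvPolynomial (Fin n) P) (j : J) : aeval (fun i => ψ (X i) j) p = ψ p j :=
    (AlgHom.congr_fun (aeval_unique ((Pi.evalAlgHom P (fun _ => H) j).comp ψ)) p).symm
  intro f hf
  funext j
  rw [← hcoord]
  exact hf _ fun g hg => by rw [hcoord, show ψ g = 0 from hT hg, Pi.zero_apply]

variable (H) in
noncomputable def evalOnHZeroLocus (T : Set (MvPolynomial (Fin n) P)) :
    MvPolynomial (Fin n) P →ₐ[P] (ULift.{w} (hZeroLocus P H n T) → H) :=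
  AlgHom.pi fun μ => aeval μ.down.1

theorem coe_ker_evalOnHZeroLocus (T : Set (MvPolynomial (Fin n) P)) :
    (RingHom.ker (evalOnHZeroLocus.{u, v, w} H T) : Set (MvPolynomial (Fin n) P)) =
      hClosure P H n T := by
  refine Set.ext fun f => ?_
  simp only [SetLike.mem_coe, RingHom.mem_ker, funext_iff, evalOnHZeroLocus, AlgHom.pi_apply]
  exact ⟨fun h μ hμ => h ⟨μ, hμ⟩, fun h μ => h μ.down.1 μ.down.2⟩

end

/-- an ideal `I` is `H`-closed iff the quotient algebra embeds into
some power `J → H` of `H`. -/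
theorem isHClosed_iff_embeds_in_power (P : Type u) [Field P]
    (H : Type v) [CommRing H] [Algebra P H]
    (n : ℕ) (I : Ideal (MvPolynomial (Fin n) P)) :
    (I : Set (MvPolynomial (Fin n) P)) = hClosure P H n ↑I
      ↔
    ∃ (J : Type (max u v))
      (g : (MvPolynomial (Fin n) P ⧸ I) →ₐ[P] (J → H)),
      Function.Injective g := by
  constructor
  · intro hI
    have hker : RingHom.ker (evalOnHZeroLocus.{u, v, u} H (I : Set _)) = I :=
      SetLike.coe_injective ((coe_ker_evalOnHZeroLocus _).trans hI.symm)
    exact ⟨_, Ideal.Quotient.liftₐ I _ fun f hf => hker.ge hf, (Ideal.injective_lift_iff _).mpr hker⟩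
  · rintro ⟨J, g, hg⟩
    have hker : RingHom.ker (g.comp (Ideal.Quotient.mkₐ P I)) = I := by
      ext f
      rw [RingHom.mem_ker, AlgHom.comp_apply, map_eq_zero_iff g hg, Ideal.Quotient.mkₐ_eq_mk,
        Ideal.Quotient.eq_zero_iff_mem]
    refine subset_antisymm (subset_hClosure _) ?_
    simpa only [hker] using hClosure_subset_ker _ hker.ge
end

section
/- Let P be a field and X a class of commutative P-algebras given as a family A : κ → Type. Then X is logically compact if and only if for every n : ℕ, the union of every nonempty directed (under inclusion) family of X-closed ideals of MvPolynomial (Fin n) P is again an X-closed ideal. -/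
open MvPolynomial

universe u v w x

/-- The class `X` given by the family `A` is logically compact: every infinitary
quasiidentity holding in all members of the class reduces to a finitary one. -/
def LogicallyCompact (P : Type u) [Field P] {κ : Type v} (A : κ → Type w)
    [∀ k, CommRing (A k)] [∀ k, Algebra P (A k)] : Prop :=
  ∀ (n : ℕ) (T : Set (MvPolynomial (Fin n) P)) (f : MvPolynomial (Fin n) P),
    (∀ (k : κ) (μ : Fin n → A k),
        (∀ g ∈ T, aeval μ g = 0) → aeval μ f = 0) →
    ∃ T₀ : Finset (MvPolynomial (Fin n) P), ↑T₀ ⊆ T ∧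
      ∀ (k : κ) (μ : Fin n → A k),
        (∀ g ∈ T₀, aeval μ g = 0) → aeval μ f = 0

/-! The `X`-closure of a set `S` of polynomials, the ideal of all `f` vanishing at every point
(of a member of `X`) at which `S` vanishes, is a closure operator. Logical compactness says
precisely that this operator is finitary, and the `X`-closed ideals are exactly its closed sets:
if `I` is closed, `MvPolynomial (Fin n) P ⧸ I` embeds into the product of the members of `X`
indexed by the points at which `I` vanishes. A closure operator is finitary iff directed unions
of closed sets are closed. -/

section Closure

variable {R : Type*} [CommSemiring R] {σ : Type*} {κ : Type*} (A : κ → Type*)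
  [∀ k, CommSemiring (A k)] [∀ k, Algebra R (A k)]

noncomputable def xClosure (S : Set (MvPolynomial σ R)) : Ideal (MvPolynomial σ R) :=
  ⨅ (k : κ) (μ : σ → A k) (_ : ∀ g ∈ S, aeval μ g = 0),
    RingHom.ker (aeval μ : MvPolynomial σ R →ₐ[R] A k)

variable {A} {S T : Set (MvPolynomial σ R)}

theorem mem_xClosure {f : MvPolynomial σ R} :
    f ∈ xClosure A S ↔ ∀ (k : κ) (μ : σ → A k), (∀ g ∈ S, aeval μ g = 0) → aeval μ f = 0 := by
  simp only [xClosure, Submodule.mem_iInf, RingHom.mem_ker]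

theorem subset_xClosure : S ⊆ xClosure A S :=
  fun f hf => mem_xClosure.2 fun _ _ hμ => hμ f hf

theorem xClosure_le_of_subset (h : S ⊆ xClosure A T) : xClosure A S ≤ xClosure A T :=
  fun _ hf => mem_xClosure.2 fun k μ hμ =>
    mem_xClosure.1 hf k μ fun _ hg => mem_xClosure.1 (h hg) k μ hμ

theorem xClosure_mono (h : S ⊆ T) : xClosure A S ≤ xClosure A T :=
  xClosure_le_of_subset (h.trans subset_xClosure)

theorem xClosure_xClosure : xClosure A (xClosure A S : Set (MvPolynomial σ R)) = xClosure A S :=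
  le_antisymm (xClosure_le_of_subset le_rfl) subset_xClosure

theorem xClosure_le_ker {k : κ} (φ : MvPolynomial σ R →ₐ[R] A k)
    (h : S ⊆ RingHom.ker φ) : xClosure A S ≤ RingHom.ker φ := by
  intro f hf
  rw [RingHom.mem_ker, aeval_unique φ]
  refine mem_xClosure.1 hf k _ fun g hg => ?_
  rw [← aeval_unique φ]
  exact h hg

end Closure

section XClosed

variable {P : Type u} [Field P] {κ : Type v} {A : κ → Type w}
  [∀ k, CommRing (A k)] [∀ k, Algebra P (A k)] {n : ℕ}

theorem logicallyCompact_iff_xClosure :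
    LogicallyCompact P A ↔ ∀ (n : ℕ) (T : Set (MvPolynomial (Fin n) P)), ∀ f ∈ xClosure A T,
      ∃ T₀ : Finset (MvPolynomial (Fin n) P), ↑T₀ ⊆ T ∧ f ∈ xClosure A (T₀ : Set _) := by
  simp only [LogicallyCompact, mem_xClosure, Finset.mem_coe]

theorem IsXClosed.xClosure_le {I : Ideal (MvPolynomial (Fin n) P)} (h : IsXClosed P A I) :
    xClosure A (I : Set (MvPolynomial (Fin n) P)) ≤ I := by
  obtain ⟨J, k, g, hg⟩ := h
  intro f hf
  rw [← Ideal.Quotient.eq_zero_iff_mem, ← Ideal.Quotient.mkₐ_eq_mk P, ← map_eq_zero_iff g hg]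
  funext j
  let φ := (Pi.evalAlgHom P (fun j => A (k j)) j).comp (g.comp (Ideal.Quotient.mkₐ P I))
  have hIφ : (I : Set (MvPolynomial (Fin n) P)) ⊆ RingHom.ker φ := fun p hp => by
    simp [φ, Ideal.Quotient.eq_zero_iff_mem.2 hp]
  exact xClosure_le_ker φ hIφ hf

theorem isXClosed_of_xClosure_le {I : Ideal (MvPolynomial (Fin n) P)}
    (h : xClosure A (I : Set (MvPolynomial (Fin n) P)) ≤ I) : IsXClosed P A I := by
  let J := ULift.{u} (Σ k : κ, {μ : Fin n → A k // ∀ g ∈ I, aeval μ g = 0})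
  refine ⟨J, fun j => j.down.1,
    Ideal.Quotient.liftₐ I (AlgHom.pi fun j => aeval j.down.2.1)
      fun p hp => funext fun j => j.down.2.2 p hp, ?_⟩
  rw [injective_iff_map_eq_zero]
  intro q hq
  obtain ⟨f, rfl⟩ := Ideal.Quotient.mk_surjective q
  exact Ideal.Quotient.eq_zero_iff_mem.2
    (h (mem_xClosure.2 fun k μ hμ => congrFun hq (ULift.up ⟨k, μ, hμ⟩)))

theorem isXClosed_xClosure (S : Set (MvPolynomial (Fin n) P)) :
    IsXClosed P A (xClosure A S) :=
  isXClosed_of_xClosure_le xClosure_xClosure.le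

theorem LogicallyCompact.isXClosed_iSup {ι : Type*} [Nonempty ι]
    {I : ι → Ideal (MvPolynomial (Fin n) P)} (hc : LogicallyCompact P A)
    (hdir : Directed (· ≤ ·) I) (hI : ∀ i, IsXClosed P A (I i)) :
    IsXClosed P A (⨆ i, I i) := by
  refine isXClosed_of_xClosure_le fun f hf => ?_
  obtain ⟨T₀, hT₀, hf₀⟩ := logicallyCompact_iff_xClosure.1 hc n _ f hf
  rw [Submodule.coe_iSup_of_directed I hdir] at hT₀
  obtain ⟨i, hi⟩ := Directed.exists_mem_subset_of_finset_subset_biUnion hdir hT₀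
  exact Ideal.mem_iSup_of_mem i ((hI i).xClosure_le (xClosure_mono hi hf₀))

end XClosed

/-- `X` is logically compact iff for every `n` the union of every
nonempty directed family of `X`-closed ideals of `MvPolynomial (Fin n) P` is
again an `X`-closed ideal. -/
theorem logicallyCompact_iff_directed_union_closed (P : Type u) [Field P]
    {κ : Type v} (A : κ → Type w)
    [∀ k, CommRing (A k)] [∀ k, Algebra P (A k)] :
    LogicallyCompact P A
      ↔
    (∀ (n : ℕ) {ι : Type u} [Nonempty ι]
        (I : ι → Ideal (MvPolynomial (Fin n) P)),
        Directed (· ≤ ·) I → (∀ i, IsXClosed P A (I i)) →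
        ∃ I' : Ideal (MvPolynomial (Fin n) P),
          (I' : Set (MvPolynomial (Fin n) P)) = ⋃ i, ↑(I i) ∧
          IsXClosed P A I') := by
  refine ⟨fun hc n ι _ I hdir hI =>
    ⟨⨆ i, I i, Submodule.coe_iSup_of_directed I hdir, hc.isXClosed_iSup hdir hI⟩, ?_⟩
  intro h
  refine logicallyCompact_iff_xClosure.2 fun n T f hf => ?_
  let Ifin : Finset T → Ideal (MvPolynomial (Fin n) P) := fun s => xClosure A ((↑) '' (s : Set T))
  have hmono : Monotone Ifin := fun s t hst => xClosure_mono (Set.image_mono hst)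
  obtain ⟨I', hI', hI'closed⟩ := h n Ifin hmono.directed_le fun s => isXClosed_xClosure _
  have hTI' : T ⊆ I' := fun g hg => hI' ▸ Set.mem_iUnion.2
    ⟨{⟨g, hg⟩}, subset_xClosure ⟨⟨g, hg⟩, Finset.mem_singleton_self _, rfl⟩⟩
  have hfI' : f ∈ (I' : Set (MvPolynomial (Fin n) P)) :=
    hI'closed.xClosure_le (xClosure_mono hTI' hf)
  obtain ⟨s, hs⟩ := Set.mem_iUnion.1 (hI' ▸ hfI')
  exact ⟨s.map (Function.Embedding.subtype _), by simp, by simpa [Ifin] using hs⟩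
end

section
/- Let P be a field and X a class of commutative P-algebras given as a family A : κ → Type. The following are equivalent: (1) for every commutative P-algebra B (in a universe containing that of P and the family), if every finitary quasiidentity that holds in all algebras A k holds in B, then every infinitary quasiidentity that holds in all algebras A k holds in B (i.e., tilde-qVar(X) = qVar(X)); (2) the class X is logically compact. -/
open MvPolynomial
open scoped Classical

universe u v w

/-- `ULift` as an algebra equivalence. -/
def uliftAlgEquiv (R : Type*) (C : Type*) [CommSemiring R] [Semiring C] [Algebra R C] :
    ULift.{v'} C ≃ₐ[R] C :=
  { ULift.ringEquiv with commutes' := fun _ => rfl }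

section Aux

variable {P : Type u} [Field P] {κ : Type v} {A : κ → Type w}
  [∀ k, CommRing (A k)] [∀ k, Algebra P (A k)]
  {n : ℕ} {T : Set (MvPolynomial (Fin n) P)}

/-- The ideal of finitary consequences of `T` over the class `A`. -/
def consIdeal (A : κ → Type w) [∀ k, CommRing (A k)] [∀ k, Algebra P (A k)]
    (T : Set (MvPolynomial (Fin n) P)) : Ideal (MvPolynomial (Fin n) P) where
  carrier := {h | ∃ T₀ : Finset (MvPolynomial (Fin n) P), ↑T₀ ⊆ T ∧
      ∀ (k : κ) (μ : Fin n → A k), (∀ g ∈ T₀, aeval μ g = 0) → aeval μ h = 0}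
  zero_mem' := ⟨∅, by simp, fun k μ _ => by simp⟩
  add_mem' := by
    rintro a b ⟨Ta, hTa, ha⟩ ⟨Tb, hTb, hb⟩
    refine ⟨Ta ∪ Tb, ?_, fun k μ hμ => ?_⟩
    · push_cast; exact Set.union_subset hTa hTb
    · rw [map_add, ha k μ (fun g hg => hμ g (Finset.mem_union_left _ hg)),
        hb k μ (fun g hg => hμ g (Finset.mem_union_right _ hg)), add_zero]
  smul_mem' := by
    rintro c h ⟨Th, hTh, hh⟩
    exact ⟨Th, hTh, fun k μ hμ => by
      rw [smul_eq_mul, map_mul, hh k μ hμ, mul_zero]⟩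

lemma finset_consIdeal {α : Type*} (s : Finset α) (wt : α → MvPolynomial (Fin n) P)
    (hs : ∀ g ∈ s, wt g ∈ consIdeal A T) :
    ∃ T₀ : Finset (MvPolynomial (Fin n) P), ↑T₀ ⊆ T ∧
      ∀ (k : κ) (μ : Fin n → A k), (∀ g ∈ T₀, aeval μ g = 0) →
        ∀ g ∈ s, aeval μ (wt g) = 0 := by
  classical
  induction s using Finset.induction_on with
  | empty => exact ⟨∅, by simp, by simp⟩
  | @insert a s hx ih =>
    obtain ⟨T₁, hT₁, h₁⟩ := ih (fun g hg => hs g (Finset.mem_insert_of_mem hg))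
    obtain ⟨T₂, hT₂, h₂⟩ := hs a (Finset.mem_insert_self a s)
    refine ⟨T₁ ∪ T₂, by push_cast; exact Set.union_subset hT₁ hT₂, fun k μ hμ g hg => ?_⟩
    rcases Finset.mem_insert.1 hg with rfl | hg
    · exact h₂ k μ (fun g hg => hμ g (Finset.mem_union_right _ hg))
    · exact h₁ k μ (fun g hg => hμ g (Finset.mem_union_left _ hg)) g hg

end Aux

/-- tilde-qVar(X) = qVar(X) holds iff the class `X` is logically
compact. -/
theorem tilde_qVar_eq_qVar_iff_logicallyCompact (P : Type u) [Field P]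
    {κ : Type v} (A : κ → Type w)
    [∀ k, CommRing (A k)] [∀ k, Algebra P (A k)] :
    (∀ (B : Type (max u v w)) [CommRing B] [Algebra P B],
        (∀ (n : ℕ) (T₀ : Finset (MvPolynomial (Fin n) P))
            (f : MvPolynomial (Fin n) P),
            (∀ (k : κ) (μ : Fin n → A k),
                (∀ g ∈ T₀, aeval μ g = 0) → aeval μ f = 0) →
            ∀ μ : Fin n → B, (∀ g ∈ T₀, aeval μ g = 0) → aeval μ f = 0) →
        (∀ (n : ℕ) (T : Set (MvPolynomial (Fin n) P))
            (f : MvPolynomial (Fin n) P),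
            (∀ (k : κ) (μ : Fin n → A k),
                (∀ g ∈ T, aeval μ g = 0) → aeval μ f = 0) →
            ∀ μ : Fin n → B, (∀ g ∈ T, aeval μ g = 0) → aeval μ f = 0))
      ↔
    LogicallyCompact P A := by
  constructor
  · intro h1 n T f hT
    classical
    set I : Ideal (MvPolynomial (Fin n) P) := consIdeal A T with hI
    set Q := MvPolynomial (Fin n) P ⧸ I
    set B : Type (max u v w) := ULift.{max v w} Q
    let e : B ≃ₐ[P] Q := uliftAlgEquiv P Q
    let mk : MvPolynomial (Fin n) P →ₐ[P] Q := Ideal.Quotient.mkₐ P I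
    have mk_zero : ∀ h : MvPolynomial (Fin n) P, mk h = 0 ↔ h ∈ I := fun h => by
      rw [show mk h = Ideal.Quotient.mk I h from rfl, Ideal.Quotient.eq_zero_iff_mem]
    -- evaluation at (e ∘ μ) via e
    have key : ∀ (m : ℕ) (μ : Fin m → B) (p : MvPolynomial (Fin m) P),
        e (aeval μ p) = aeval (fun i => e (μ i)) p := by
      intro m μ p
      exact comp_aeval_apply μ e.toAlgHom p
    -- aeval of mk composed
    have mk_aeval : ∀ (m : ℕ) (ν : Fin m → MvPolynomial (Fin n) P)
        (p : MvPolynomial (Fin m) P),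
        aeval (fun i => mk (ν i)) p = mk (aeval ν p) := by
      intro m ν p
      exact (comp_aeval_apply ν mk p).symm
    -- B satisfies all finitary quasiidentities of the class
    have hfin : ∀ (m : ℕ) (T₀ : Finset (MvPolynomial (Fin m) P))
        (p : MvPolynomial (Fin m) P),
        (∀ (k : κ) (μ : Fin m → A k),
            (∀ g ∈ T₀, aeval μ g = 0) → aeval μ p = 0) →
        ∀ μ : Fin m → B, (∀ g ∈ T₀, aeval μ g = 0) → aeval μ p = 0 := by
      intro m T₀ p hp μ hμ
      -- lift μ to polynomials
      choose ν hν using fun i => Ideal.Quotient.mk_surjective (e (μ i))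
      have hνI : ∀ g ∈ T₀, aeval ν g ∈ I := by
        intro g hg
        have : mk (aeval ν g) = 0 := by
          rw [← mk_aeval]
          have : (fun i => mk (ν i)) = fun i => e (μ i) := funext fun i => hν i
          rw [this, ← key, hμ g hg, map_zero]
        exact (mk_zero _).1 this
      obtain ⟨T₁, hT₁, h₁⟩ := finset_consIdeal (A := A) T₀ (fun g => aeval ν g) hνI
      have hνpI : aeval ν p ∈ I := by
        refine ⟨T₁, hT₁, fun k ξ hξ => ?_⟩
        have hcomp : ∀ q : MvPolynomial (Fin m) P,
            aeval (fun i => aeval ξ (ν i)) q = aeval ξ (aeval ν q) := by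
          intro q; exact (comp_aeval_apply ν (aeval ξ) q).symm
        have := hp k (fun i => aeval ξ (ν i)) (fun g hg => by
          rw [hcomp g, h₁ k ξ hξ g hg])
        rwa [hcomp p] at this
      have : mk (aeval ν p) = 0 := (mk_zero _).2 hνpI
      have he : e (aeval μ p) = 0 := by
        rw [key]
        have hfun : (fun i => e (μ i)) = fun i => mk (ν i) := funext fun i => (hν i).symm
        rw [hfun, mk_aeval, this]
      exact e.injective (by rw [he, map_zero])
    -- apply hypothesis (1) to B with canonical assignment
    set μ₀ : Fin n → B := fun i => e.symm (mk (X i)) with hμ₀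
    have hmain := h1 B hfin n T f hT μ₀ ?_
    · -- conclude f ∈ I
      have : mk f = 0 := by
        have := congrArg e hmain
        rw [key, map_zero] at this
        have hfun : (fun i => e (μ₀ i)) = fun i => mk (X i) :=
          funext fun i => e.apply_symm_apply _
        rw [hfun] at this
        rwa [show (aeval fun i => mk (X i)) f = mk f by
          rw [← comp_aeval (f := X) mk]; simp [aeval_X_left_apply]] at this
      exact (mk_zero _).1 this
    · -- premises hold at μ₀
      intro g hg
      have hgI : g ∈ I := ⟨{g}, by simpa using hg, fun k μ hμ => hμ g (Finset.mem_singleton_self g)⟩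
      have : mk g = 0 := (mk_zero _).2 hgI
      apply e.injective
      rw [key, map_zero]
      have hfun : (fun i => e (μ₀ i)) = fun i => mk (X i) :=
        funext fun i => e.apply_symm_apply _
      rw [hfun, show (aeval fun i => mk (X i)) g = mk g by
        rw [← comp_aeval (f := X) mk]; simp [aeval_X_left_apply], this]
  · intro hc B _ _ hfin n T f hT μ hμ
    obtain ⟨T₀, hsub, h₀⟩ := hc n T f hT
    exact hfin n T₀ f h₀ μ (fun g hg => hμ g (hsub hg))
end

section
/- Let P be a field and H₁, H₂ commutative P-algebras. If H₁ and H₂ are geometrically equivalent, then qVar(H₁) = qVar(H₂) (for every commutative P-algebra B, every finitary quasiidentity holding in H₁ holds in B if and only if every finitary quasiidentity holding in H₂ holds in B) and H₁ and H₂ satisfy the same identities (for every n and every f ∈ MvPolynomial (Fin n) P, aeval μ f = 0 for all μ : Fin n → H₁ if and only if aeval μ f = 0 for all μ : Fin n → H₂). -/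
open MvPolynomial

universe u v w x

/-- `H₁` and `H₂` are geometrically equivalent: all closure operators coincide. -/
def GeomEquiv (P : Type u) [Field P] (H₁ : Type v) [CommRing H₁] [Algebra P H₁]
    (H₂ : Type w) [CommRing H₂] [Algebra P H₂] : Prop :=
  ∀ (n : ℕ) (T : Set (MvPolynomial (Fin n) P)),
    hClosure P H₁ n T = hClosure P H₂ n T

/-- `B ∈ qVar(H)`: every finitary quasiidentity holding in `H` holds in `B`. -/
def MemQVar (P : Type u) [Field P] (H : Type v) [CommRing H] [Algebra P H]
    (B : Type x) [CommRing B] [Algebra P B] : Prop :=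
  ∀ (n : ℕ) (T : Finset (MvPolynomial (Fin n) P)) (f : MvPolynomial (Fin n) P),
    (∀ μ : Fin n → H, (∀ g ∈ T, aeval μ g = 0) → aeval μ f = 0) →
    ∀ μ : Fin n → B, (∀ g ∈ T, aeval μ g = 0) → aeval μ f = 0

/-- geometrically equivalent algebras generate the same
quasivariety and satisfy the same identities. -/
theorem geomEquiv_imp_qVar_eq_and_same_identities (P : Type u) [Field P]
    (H₁ : Type v) [CommRing H₁] [Algebra P H₁]
    (H₂ : Type w) [CommRing H₂] [Algebra P H₂]
    (h : GeomEquiv P H₁ H₂) :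
    (∀ (B : Type x) [CommRing B] [Algebra P B],
        MemQVar P H₁ B ↔ MemQVar P H₂ B)
      ∧
    (∀ (n : ℕ) (f : MvPolynomial (Fin n) P),
        (∀ μ : Fin n → H₁, aeval μ f = 0) ↔ (∀ μ : Fin n → H₂, aeval μ f = 0)) := by
  have key : ∀ (n : ℕ) (T : Set (MvPolynomial (Fin n) P)) (f : MvPolynomial (Fin n) P),
      (∀ μ : Fin n → H₁, (∀ g ∈ T, aeval μ g = 0) → aeval μ f = 0) ↔
      (∀ μ : Fin n → H₂, (∀ g ∈ T, aeval μ g = 0) → aeval μ f = 0) := by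
    intro n T f
    constructor
    · intro hf
      have : f ∈ hClosure P H₂ n T := (h n T) ▸ hf
      exact this
    · intro hf
      have : f ∈ hClosure P H₁ n T := (h n T).symm ▸ hf
      exact this
  constructor
  · intro B _ _
    constructor
    · intro hB n T f hf
      exact hB n T f ((key n ↑T f).mpr hf)
    · intro hB n T f hf
      exact hB n T f ((key n ↑T f).mp hf)
  · intro n f
    have := key n ∅ f
    simp only [Set.mem_empty_iff_false, false_implies, implies_true, true_implies] at this
    exact this
end

section
/- Let P be a field and let H₁ and H₂ be logically noetherian commutative P-algebras. Then H₁ and H₂ are geometrically equivalent if and only if they satisfy the same finitary quasiidentities, i.e., for every n : ℕ, every finite T ⊆ MvPolynomial (Fin n) P and every f ∈ MvPolynomial (Fin n) P, the quasiidentity with premise set T and conclusion f holds in H₁ if and only if it holds in H₂. -/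
open MvPolynomial

universe u v w

/-- `H` is logically noetherian: membership in any closure `T''_H` is witnessed
by a finite subset of `T`. -/
def LogicallyNoetherian (P : Type u) [Field P]
    (H : Type v) [CommRing H] [Algebra P H] : Prop :=
  ∀ (n : ℕ) (T : Set (MvPolynomial (Fin n) P)) (f : MvPolynomial (Fin n) P),
    f ∈ hClosure P H n T →
    ∃ T₀ : Finset (MvPolynomial (Fin n) P), ↑T₀ ⊆ T ∧ f ∈ hClosure P H n ↑T₀

/-- logically noetherian algebras are geometrically equivalent iff
they satisfy the same finitary quasiidentities. -/
theorem geomEquiv_iff_same_quasiidentities (P : Type u) [Field P]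
    (H₁ : Type v) [CommRing H₁] [Algebra P H₁]
    (H₂ : Type w) [CommRing H₂] [Algebra P H₂]
    (h₁ : LogicallyNoetherian P H₁) (h₂ : LogicallyNoetherian P H₂) :
    GeomEquiv P H₁ H₂
      ↔
    (∀ (n : ℕ) (T : Finset (MvPolynomial (Fin n) P)) (f : MvPolynomial (Fin n) P),
        (∀ μ : Fin n → H₁, (∀ g ∈ T, aeval μ g = 0) → aeval μ f = 0) ↔
        (∀ μ : Fin n → H₂, (∀ g ∈ T, aeval μ g = 0) → aeval μ f = 0)) := by
  constructor
  · intro hge n T f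
    have := hge n (↑T)
    constructor
    · intro hq μ hμ
      have hf : f ∈ hClosure P H₁ n ↑T := fun ν hν => hq ν (fun g hg => hν g hg)
      rw [this] at hf
      exact hf μ hμ
    · intro hq μ hμ
      have hf : f ∈ hClosure P H₂ n ↑T := fun ν hν => hq ν (fun g hg => hν g hg)
      rw [← this] at hf
      exact hf μ hμ
  · intro hq n T
    ext f
    constructor
    · intro hf
      obtain ⟨T₀, hT₀, hf₀⟩ := h₁ n T f hf
      intro μ hμ
      exact (hq n T₀ f).mp (fun ν hν => hf₀ ν hν) μ (fun g hg => hμ g (hT₀ hg))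
    · intro hf
      obtain ⟨T₀, hT₀, hf₀⟩ := h₂ n T f hf
      intro μ hμ
      exact (hq n T₀ f).mpr (fun ν hν => hf₀ ν hν) μ (fun g hg => hμ g (hT₀ hg))
end

section
/- Let P be a field and H a commutative P-algebra that is not logically noetherian. Then there exists a commutative P-algebra H' (an ultrapower of H) such that H and H' satisfy the same finitary quasiidentities, yet H and H' are not geometrically equivalent. -/
open MvPolynomial

universe u v

/-- `H₁` and `H₂` satisfy the same finitary quasiidentities. -/
def SameQuasiidentities (P : Type u) [Field P]
    (H₁ : Type v) [CommRing H₁] [Algebra P H₁]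
    (H₂ : Type w) [CommRing H₂] [Algebra P H₂] : Prop :=
  ∀ (n : ℕ) (T : Finset (MvPolynomial (Fin n) P)) (f : MvPolynomial (Fin n) P),
    (∀ μ : Fin n → H₁, (∀ g ∈ T, aeval μ g = 0) → aeval μ f = 0) ↔
    (∀ μ : Fin n → H₂, (∀ g ∈ T, aeval μ g = 0) → aeval μ f = 0)

section Aux

variable {P : Type u} [Field P] {H : Type v} [CommRing H] [Algebra P H] {n : ℕ}

variable {P : Type u} [Field P] {H : Type v} [CommRing H] [Algebra P H] {n : ℕ}

def UIdx (T : Set (MvPolynomial (Fin n) P)) : Type u :=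
  {s : Finset (MvPolynomial (Fin n) P) // ↑s ⊆ T}

noncomputable instance (T : Set (MvPolynomial (Fin n) P)) : SemilatticeSup (UIdx T) :=
  letI := Classical.decEq (MvPolynomial (Fin n) P)
  Subtype.semilatticeSup (fun a b ha hb => by
    intro x hx
    rcases Finset.mem_union.1 hx with h | h
    · exact ha h
    · exact hb h)

instance (T : Set (MvPolynomial (Fin n) P)) : Nonempty (UIdx T) :=
  ⟨⟨∅, by simp⟩⟩

def uIdeal (H : Type v) [CommRing H] [Algebra P H] (T : Set (MvPolynomial (Fin n) P)) :
    Ideal (UIdx T → H) where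
  carrier := {x | ∀ᶠ i in Filter.atTop, x i = 0}
  zero_mem' := Filter.Eventually.of_forall (fun _ => rfl)
  add_mem' := fun hx hy => (hx.and hy).mono (by rintro i ⟨h1, h2⟩; simp [Pi.add_apply, h1, h2])
  smul_mem' := fun c x hx => hx.mono (fun i hi => by
    simp [smul_eq_mul, Pi.mul_apply, hi])

lemma eventually_mem {T : Set (MvPolynomial (Fin n) P)} {g : MvPolynomial (Fin n) P}
    (hg : g ∈ T) : ∀ᶠ i : UIdx T in Filter.atTop, g ∈ i.1 :=
  Filter.eventually_atTop.2 ⟨⟨{g}, by simpa using hg⟩, fun j hj =>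
    Finset.singleton_subset_iff.mp hj⟩

lemma pi_aeval {A : Type*} [CommRing A] [Algebra P A] {ι : Type*} {m : ℕ}
    (i : ι) (ν : Fin m → ι → A) (q : MvPolynomial (Fin m) P) :
    aeval ν q i = aeval (fun k => ν k i) q :=
  comp_aeval_apply ν (Pi.evalAlgHom P (fun _ => A) i) q

lemma mk_aeval {A : Type*} [CommRing A] [Algebra P A] {m : ℕ}
    (J : Ideal A) (ν : Fin m → A) (q : MvPolynomial (Fin m) P) :
    Ideal.Quotient.mk J (aeval ν q) = aeval (fun k => Ideal.Quotient.mk J (ν k)) q :=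
  comp_aeval_apply ν (Ideal.Quotient.mkₐ P J) q

lemma hom_aeval {A : Type*} [CommRing A] [Algebra P A] {B : Type*} [CommRing B] [Algebra P B]
    {m : ℕ} (φ : A →ₐ[P] B) (ν : Fin m → A) (q : MvPolynomial (Fin m) P) :
    φ (aeval ν q) = aeval (fun k => φ (ν k)) q :=
  comp_aeval_apply ν φ q
end Aux

/-- if `H` is not logically noetherian, then there is a commutative
`P`-algebra `H'` (an ultrapower of `H`) with the same finitary quasiidentities
as `H` but not geometrically equivalent to `H`. -/

theorem exists_ultrapower_not_geomEquiv (P : Type u) [Field P]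
    (H : Type v) [CommRing H] [Algebra P H]
    (h : ¬ LogicallyNoetherian P H) :
    ∃ (H' : Type (max u v)) (_ : CommRing H') (_ : Algebra P H'),
      SameQuasiidentities P H H' ∧ ¬ GeomEquiv P H H' := by
  simp only [LogicallyNoetherian, not_forall] at h
  obtain ⟨n, T, f, hf, hno⟩ := h
  push_neg at hno
  have hw : ∀ i : UIdx T, ∃ μ : Fin n → H,
      (∀ g ∈ i.1, aeval μ g = 0) ∧ aeval μ f ≠ 0 := by
    intro i
    have := hno i.1 i.2
    simp only [hClosure, Set.mem_setOf_eq, not_forall] at this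
    obtain ⟨μ, hμ, hμf⟩ := this
    exact ⟨μ, fun g hg => hμ g (by exact_mod_cast hg), hμf⟩
  choose w hw1 hw2 using hw
  set J : Ideal (UIdx T → H) := uIdeal H T with hJ
  refine ⟨(UIdx T → H) ⧸ J, inferInstance, inferInstance, ?_, ?_⟩
  · -- same quasiidentities
    intro m T₀ p
    constructor
    · intro hH μ hμ
      have lift : ∀ k, ∃ y : UIdx T → H, Ideal.Quotient.mk J y = μ k :=
        fun k => Ideal.Quotient.mk_surjective (μ k)
      choose ν hν using lift
      have hcomp : ∀ q : MvPolynomial (Fin m) P,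
          aeval μ q = Ideal.Quotient.mk J (aeval ν q) := by
        intro q
        rw [mk_aeval]
        simp only [hν]
      have hprem : ∀ᶠ i in Filter.atTop, ∀ g ∈ T₀, aeval (fun k => ν k i) g = 0 := by
        rw [Filter.eventually_all_finset]
        intro g hg
        have hmem : aeval ν g ∈ J := by
          rw [← Ideal.Quotient.eq_zero_iff_mem, ← hcomp]
          exact hμ g hg
        exact hmem.mono (fun i hi => by rw [← pi_aeval]; exact hi)
      have hfmem : aeval ν p ∈ J := by
        refine hprem.mono (fun i hi => ?_)
        rw [pi_aeval]
        exact hH (fun k => ν k i) hi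
      rw [hcomp, Ideal.Quotient.eq_zero_iff_mem]
      exact hfmem
    · intro hQ μ hμ
      set φ : H →ₐ[P] (UIdx T → H) ⧸ J :=
        (Ideal.Quotient.mkₐ P J).comp (Pi.constAlgHom P (UIdx T) H) with hφ
      have hinj : Function.Injective φ := by
        intro a b hab
        have hab' : Ideal.Quotient.mk J (Function.const (UIdx T) a)
            = Ideal.Quotient.mk J (Function.const (UIdx T) b) := hab
        have hmem : Function.const (UIdx T) a - Function.const (UIdx T) b ∈ J :=
          Ideal.Quotient.eq.mp hab' 
        have hev : ∀ᶠ _ : UIdx T in Filter.atTop, a - b = 0 := hmem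
        obtain ⟨_, hi⟩ := hev.exists
        exact sub_eq_zero.1 hi
      have hz := hQ (fun k => φ (μ k)) (fun g hg => by
        rw [← hom_aeval φ, hμ g hg, map_zero])
      rw [← hom_aeval φ] at hz
      have h0 : φ (aeval μ p) = φ 0 := by rw [hz, map_zero]
      exact hinj h0
  · intro hge
    have heq := hge n T
    set ν : Fin n → (UIdx T → H) := fun k i => w i k with hν
    set μ : Fin n → (UIdx T → H) ⧸ J := fun k => Ideal.Quotient.mk J (ν k) with hμ
    have hcomp : ∀ q : MvPolynomial (Fin n) P,
        aeval μ q = Ideal.Quotient.mk J (aeval ν q) := by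
      intro q
      rw [mk_aeval]
    have hfq : f ∈ hClosure P ((UIdx T → H) ⧸ J) n T := heq ▸ hf
    have hprem : ∀ g ∈ T, aeval μ g = 0 := by
      intro g hg
      rw [hcomp, Ideal.Quotient.eq_zero_iff_mem]
      refine (eventually_mem hg).mono (fun i hi => ?_)
      rw [pi_aeval]
      exact hw1 i g hi
    have hzero := hfq μ hprem
    rw [hcomp, Ideal.Quotient.eq_zero_iff_mem] at hzero
    obtain ⟨i, hi⟩ := (hzero : ∀ᶠ i : UIdx T in Filter.atTop, (aeval ν f) i = 0).exists
    rw [pi_aeval] at hi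
    exact hw2 i hi
end

section
/- Let P be a field, n ≥ 1, W := MvPolynomial (Fin n) P, and I an ideal of W. Define the relation ρ(I) on P-algebra endomorphisms of W by: ν ρ(I) ν' if and only if ν w − ν' w ∈ I for all w ∈ W (equivalently, the compositions of ν and ν' with the quotient map W → W ⧸ I coincide). Then for all w₁, w₂ ∈ W: w₁ − w₂ ∈ I if and only if there exist w ∈ W and P-algebra endomorphisms ν, ν' of W with ν ρ(I) ν', ν w = w₁ and ν' w = w₂. (In other words, τ_W(ρ_W(I)) recovers the congruence determined by I.) -/
universe u

/-- for `W = MvPolynomial (Fin n) P` with `n ≥ 1` and an ideal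
`I` of `W`, the operation `τ_W` applied to the relation `ρ_W(I)` on `End W`
recovers the congruence determined by `I`:
`w₁ ≡ w₂ mod I` iff `w₁ = ν w`, `w₂ = ν' w` for some `w` and endomorphisms
`ν, ν'` with `ν ρ(I) ν'`. -/
theorem tau_rho_eq_congruence (P : Type u) [Field P] (n : ℕ) (hn : 1 ≤ n)
    (I : Ideal (MvPolynomial (Fin n) P))
    (w₁ w₂ : MvPolynomial (Fin n) P) :
    w₁ - w₂ ∈ I
      ↔
    ∃ (w : MvPolynomial (Fin n) P)
      (ν ν' : MvPolynomial (Fin n) P →ₐ[P] MvPolynomial (Fin n) P),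
      (∀ u : MvPolynomial (Fin n) P, ν u - ν' u ∈ I) ∧
      ν w = w₁ ∧ ν' w = w₂ := by
  constructor
  · intro h
    refine ⟨MvPolynomial.X ⟨0, hn⟩, MvPolynomial.aeval (fun _ => w₁),
      MvPolynomial.aeval (fun _ => w₂), ?_, by simp, by simp⟩
    intro u
    rw [← Ideal.Quotient.eq]
    have : ∀ v : MvPolynomial (Fin n) P,
        (Ideal.Quotient.mk I) (MvPolynomial.aeval (fun _ => v) u)
          = MvPolynomial.aeval (fun _ : Fin n => (Ideal.Quotient.mk I) v) u := by
      intro v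
      rw [MvPolynomial.aeval_def, MvPolynomial.aeval_def, MvPolynomial.eval₂_comp_left]
      rfl
    rw [this, this, Ideal.Quotient.eq.mpr h]
  · rintro ⟨w, ν, ν', h, rfl, rfl⟩
    exact h w
end

section
/- Let P be a field and H a finite-dimensional (as a P-vector space) associative unital P-algebra, not necessarily commutative. Then H is geometrically noetherian: for every n : ℕ and every set T ⊆ FreeAlgebra P (Fin n), there exists a finite subset T₀ ⊆ T such that for every μ : Fin n → H, if (FreeAlgebra.lift P μ) g = 0 for all g ∈ T₀, then (FreeAlgebra.lift P μ) g = 0 for all g ∈ T. -/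
/-!
Fix a basis `b₁, …, b_d` of `H` and treat the `n·d` coordinates of a point `μ : Fin n → H` as
indeterminates. Evaluating `g` at the generic point `xᵢ = ∑ⱼ Xᵢⱼ ⊗ bⱼ` of `P[Xᵢⱼ] ⊗ H` yields
`d` coordinate polynomials such that `g(μ) = 0` exactly when they all vanish at the
coordinates of `μ`. The equations `T` thus become a system of polynomial equations in finitely
many variables over a field, and the Hilbert basis theorem shows that the ideal it generates is
already generated by the polynomials of finitely many `g ∈ T`.
-/

universe u v

open TensorProduct MvPolynomial

theorem IsNoetherian.exists_finset_subset_biSup_le {R M α : Type*} [Semiring R]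
    [AddCommMonoid M] [Module R M] [IsNoetherian R M] (N : α → Submodule R M) (T : Set α) :
    ∃ T₀ : Finset α, ↑T₀ ⊆ T ∧ ⨆ a ∈ T, N a ≤ ⨆ a ∈ T₀, N a := by
  have hcompact := (Submodule.fg_iff_compact _).mp (IsNoetherian.noetherian (⨆ a ∈ T, N a))
  obtain ⟨s, hs⟩ := CompleteLattice.IsCompactElement.exists_finset_of_le_iSup _ hcompact
    (fun a : T ↦ N a) iSup_subtype'.le
  refine ⟨s.map (Function.Embedding.subtype _), by simp, hs.trans ?_⟩
  exact iSup₂_le fun a ha ↦ le_biSup N (Finset.mem_map_of_mem _ ha)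

namespace Module.Basis

variable {P H σ ι : Type*} [CommSemiring P] [Semiring H] [Algebra P H] (b : Basis ι P H)

theorem repr_lid_rTensor {R : Type*} [CommSemiring R] [Algebra P R]
    (f : R →ₗ[P] P) (x : R ⊗[P] H) (j : ι) :
    b.repr (TensorProduct.lid P H (f.rTensor H x)) j = f ((b.baseChange R).repr x j) := by
  induction x using TensorProduct.induction_on with
  | zero => simp
  | tmul r h => simp [mul_comm]
  | add x y hx hy => simp [hx, hy]

variable [Fintype ι]

/-- The variable `X (i, j)` stands for the `j`-th coordinate of the `i`-th entry of a point. -/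
noncomputable def genericPoint : σ → MvPolynomial (σ × ι) P ⊗[P] H :=
  fun i ↦ ∑ j, X (i, j) ⊗ₜ b j

noncomputable def coordEval (μ : σ → H) : MvPolynomial (σ × ι) P →ₐ[P] P :=
  aeval fun p ↦ b.repr (μ p.1) p.2

noncomputable def specializeAt (μ : σ → H) : MvPolynomial (σ × ι) P ⊗[P] H →ₐ[P] H :=
  (Algebra.TensorProduct.lid P H).toAlgHom.comp
    (Algebra.TensorProduct.map (b.coordEval μ) (AlgHom.id P H))

theorem specializeAt_genericPoint (μ : σ → H) (i : σ) :
    b.specializeAt μ (b.genericPoint i) = μ i := by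
  simp [specializeAt, genericPoint, coordEval, b.sum_repr]

theorem specializeAt_comp_lift_genericPoint (μ : σ → H) :
    (b.specializeAt μ).comp (FreeAlgebra.lift P b.genericPoint) = FreeAlgebra.lift P μ :=
  FreeAlgebra.hom_ext <| funext fun i ↦ by simp [specializeAt_genericPoint]

noncomputable def coordPolynomial (g : FreeAlgebra P σ) (j : ι) : MvPolynomial (σ × ι) P :=
  (b.baseChange _).repr (FreeAlgebra.lift P b.genericPoint g) j

theorem repr_lift_apply (μ : σ → H) (g : FreeAlgebra P σ) (j : ι) :
    b.repr (FreeAlgebra.lift P μ g) j = b.coordEval μ (b.coordPolynomial g j) := by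
  rw [← b.specializeAt_comp_lift_genericPoint μ]
  exact b.repr_lid_rTensor (b.coordEval μ).toLinearMap _ j

theorem lift_eq_zero_iff_span_le_ker (μ : σ → H) (g : FreeAlgebra P σ) :
    FreeAlgebra.lift P μ g = 0 ↔
      Ideal.span (Set.range (b.coordPolynomial g)) ≤ RingHom.ker (b.coordEval μ) := by
  rw [Ideal.span_le, Set.range_subset_iff, ← b.forall_coord_eq_zero_iff]
  simp only [coord_apply, repr_lift_apply, SetLike.mem_coe, RingHom.mem_ker]

end Module.Basis

/-- a finite-dimensional associative unital `P`-algebra is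
geometrically noetherian: every system of equations over a free associative
algebra is equivalent over `H` to a finite subsystem. -/
theorem finiteDimensional_geometrically_noetherian (P : Type u) [Field P]
    (H : Type v) [Ring H] [Algebra P H] [FiniteDimensional P H]
    (n : ℕ) (T : Set (FreeAlgebra P (Fin n))) :
    ∃ T₀ : Finset (FreeAlgebra P (Fin n)), ↑T₀ ⊆ T ∧
      ∀ μ : Fin n → H,
        (∀ g ∈ T₀, (FreeAlgebra.lift P μ) g = 0) →
        ∀ g ∈ T, (FreeAlgebra.lift P μ) g = 0 := by
  let b := Module.finBasis P H
  obtain ⟨T₀, hT₀T, hT₀⟩ := IsNoetherian.exists_finset_subset_biSup_le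
    (fun g ↦ Ideal.span (Set.range (b.coordPolynomial g))) T
  refine ⟨T₀, hT₀T, fun μ hμ g hg ↦ ?_⟩
  simp only [b.lift_eq_zero_iff_span_le_ker] at hμ ⊢
  exact (le_biSup _ hg).trans (hT₀.trans (iSup₂_le hμ))
end

section
/- Let K be a (possibly noncommutative) left noetherian ring (IsNoetherianRing K), and let C_K be the category of finitely generated free left K-modules: objects are natural numbers n, and morphisms from n to m are K-linear maps (Fin n → K) →ₗ[K] (Fin m → K). Then every automorphism F of C_K is semiinner: there exist a ring automorphism σ : K ≃+* K and, for each n, an additive bijection s_n : (Fin n → K) ≃+ (Fin (F.obj n) → K) satisfying s_n (c • x) = σ c • s_n x for all c : K, such that for every morphism f from n to m and every x : Fin n → K, (F.map f) (s_n x) = s_m (f x). -/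
open CategoryTheory

universe u

/-- Objects of the category of finitely generated free left `K`-modules:
natural numbers. -/
structure FreeModCat (K : Type u) [Ring K] where
  n : ℕ

variable (K : Type u) [Ring K]

/-- The category of finitely generated free left `K`-modules: morphisms from
`n` to `m` are `K`-linear maps `(Fin n → K) →ₗ[K] (Fin m → K)`. -/
instance : Category (FreeModCat K) where
  Hom a b := (Fin a.n → K) →ₗ[K] (Fin b.n → K)
  id a := LinearMap.id
  comp f g := g.comp f

/-- View a morphism of the category as a `K`-linear map. -/
def FreeModCat.toLinearMap {a b : FreeModCat K} (f : a ⟶ b) :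
    (Fin a.n → K) →ₗ[K] (Fin b.n → K) := f

/-!
An automorphism `F` preserves retracts, and over a nontrivial noetherian ring (strong rank
condition) `K^m` is a retract of `K^n` iff `m ≤ n`; so `n ↦ F n` is an order automorphism of `ℕ`,
hence the identity, and `F 1 ≅ 1` (over the zero ring all objects are isomorphic anyway). As an
equivalence between categories with biproducts, `F` is additive. Identify `x ∈ K^a` with
`x̂ : 1 ⟶ a`, `t ↦ t 0 • x`, fix `e : 1 ≅ F 1`, and put `s_a x := F(x̂) (e 1)`: naturality is
functoriality, `s_a` is an additive bijection since `F` is additive, full and faithful, and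
`c • x = x̂ (c, …, c)` turns `s_1 (c, …, c) = σ c • e 1` into the semilinearity of every `s_a`.
-/

lemma CategoryTheory.Functor.additive_of_isEquivalence {C D : Type*} [Category C] [Category D]
    [Preadditive C] [Preadditive D] [Limits.HasBinaryBiproducts C] (F : C ⥤ D) [F.IsEquivalence] :
    F.Additive :=
  F.additive_of_preserves_binary_products

namespace FreeModCat

variable {K}

@[ext]
lemma hom_ext {a b : FreeModCat K} {f g : a ⟶ b}
    (h : ∀ x, toLinearMap K f x = toLinearMap K g x) : f = g :=
  LinearMap.ext h

def ofLinearMap {a b : FreeModCat K} (f : (Fin a.n → K) →ₗ[K] (Fin b.n → K)) : a ⟶ b := f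

@[simp]
lemma toLinearMap_ofLinearMap {a b : FreeModCat K} (f : (Fin a.n → K) →ₗ[K] (Fin b.n → K)) :
    toLinearMap K (ofLinearMap f : a ⟶ b) = f := rfl

@[simp]
lemma toLinearMap_comp {a b c : FreeModCat K} (f : a ⟶ b) (g : b ⟶ c) :
    toLinearMap K (f ≫ g) = (toLinearMap K g).comp (toLinearMap K f) := rfl

@[simp]
lemma toLinearMap_id (a : FreeModCat K) : toLinearMap K (𝟙 a) = LinearMap.id := rfl

instance : Preadditive (FreeModCat K) where
  homGroup a b := inferInstanceAs (AddCommGroup ((Fin a.n → K) →ₗ[K] (Fin b.n → K)))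
  add_comp _ _ _ _ _ g := LinearMap.comp_add _ _ (toLinearMap K g)
  comp_add _ _ _ f _ _ := LinearMap.add_comp (toLinearMap K f) _ _

@[simp]
lemma toLinearMap_zero (a b : FreeModCat K) : toLinearMap K (0 : a ⟶ b) = 0 := rfl

def piFinAddEquivProd (m n : ℕ) : (Fin (m + n) → K) ≃ₗ[K] (Fin m → K) × (Fin n → K) :=
  (LinearEquiv.funCongrLeft K K finSumFinEquiv).trans (LinearEquiv.sumArrowLequivProdArrow _ _ K K)

def binaryBicone (a b : FreeModCat K) : Limits.BinaryBicone a b where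
  pt := ⟨a.n + b.n⟩
  fst := ofLinearMap <| (LinearMap.fst K _ _).comp (piFinAddEquivProd a.n b.n).toLinearMap
  snd := ofLinearMap <| (LinearMap.snd K _ _).comp (piFinAddEquivProd a.n b.n).toLinearMap
  inl := ofLinearMap <| (piFinAddEquivProd a.n b.n).symm.toLinearMap.comp (LinearMap.inl K _ _)
  inr := ofLinearMap <| (piFinAddEquivProd a.n b.n).symm.toLinearMap.comp (LinearMap.inr K _ _)
  inl_fst := by ext x; simp
  inl_snd := by ext x; simp
  inr_fst := by ext x; simp
  inr_snd := by ext x; simp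

lemma binaryBicone_total (a b : FreeModCat K) :
    (binaryBicone a b).fst ≫ (binaryBicone a b).inl +
      (binaryBicone a b).snd ≫ (binaryBicone a b).inr = 𝟙 _ := by
  refine hom_ext fun (x : Fin (a.n + b.n) → K) => ?_
  change (piFinAddEquivProd a.n b.n).symm ((piFinAddEquivProd a.n b.n x).1, 0) +
    (piFinAddEquivProd a.n b.n).symm (0, (piFinAddEquivProd a.n b.n x).2) = x
  rw [← map_add, Prod.mk_add_mk, add_zero, zero_add, LinearEquiv.symm_apply_apply]

instance : Limits.HasBinaryBiproducts (FreeModCat K) where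
  has_binary_biproduct a b := .mk ⟨_, Limits.isBinaryBilimitOfTotal _ (binaryBicone_total a b)⟩

noncomputable def retractOfLE {a b : FreeModCat K} (h : a.n ≤ b.n) : Retract a b where
  i := ofLinearMap (Function.ExtendByZero.linearMap K (Fin.castLE h))
  r := ofLinearMap (LinearMap.funLeft K K (Fin.castLE h))
  retract := by
    ext x i
    simp [(Fin.castLE_injective h).extend_apply]

lemma n_le_of_retract [StrongRankCondition K] {a b : FreeModCat K} (h : Retract a b) :
    a.n ≤ b.n :=
  le_of_fin_injective K (toLinearMap K h.i) <| Function.LeftInverse.injective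
    (g := toLinearMap K h.r) fun x => DFunLike.congr_fun (congrArg (toLinearMap K) h.retract) x

lemma n_eq_of_iso [StrongRankCondition K] {a b : FreeModCat K} (e : a ≅ b) : a.n = b.n :=
  le_antisymm (n_le_of_retract e.retract) (n_le_of_retract e.symm.retract)

lemma n_obj_le_n_obj_of_le [StrongRankCondition K] (F : FreeModCat K ⥤ FreeModCat K)
    {a b : FreeModCat K} (h : a.n ≤ b.n) : (F.obj a).n ≤ (F.obj b).n :=
  n_le_of_retract ((retractOfLE h).map F)

lemma n_obj_of_isEquivalence [StrongRankCondition K] (F : FreeModCat K ⥤ FreeModCat K)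
    [F.IsEquivalence] (a : FreeModCat K) : (F.obj a).n = a.n := by
  let φ : ℕ ≃o ℕ := OrderIso.ofHomInv
    ⟨fun n => (F.obj ⟨n⟩).n, fun _ _ h => n_obj_le_n_obj_of_le F h⟩
    ⟨fun n => (F.inv.obj ⟨n⟩).n, fun _ _ h => n_obj_le_n_obj_of_le F.inv h⟩
    (by ext n; exact n_eq_of_iso (F.asEquivalence.counitIso.app ⟨n⟩))
    (by ext n; exact (n_eq_of_iso (F.asEquivalence.unitIso.app ⟨n⟩)).symm)
  exact DFunLike.congr_fun (Subsingleton.elim φ (OrderIso.refl ℕ)) a.n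

def one : FreeModCat K := ⟨1⟩

instance : NeZero (one : FreeModCat K).n := ⟨one_ne_zero⟩

lemma nonempty_iso_obj_one [IsNoetherianRing K] (F : FreeModCat K ⥤ FreeModCat K)
    [F.IsEquivalence] : Nonempty (one ≅ F.obj one) := by
  rcases subsingleton_or_nontrivial K with hK | hK
  · exact ⟨⟨0, 0, hom_ext fun _ => Subsingleton.elim _ _, hom_ext fun _ => Subsingleton.elim _ _⟩⟩
  · exact ⟨eqToIso (congrArg mk (n_obj_of_isEquivalence F one)).symm⟩

def ofVec {a : FreeModCat K} (x : Fin a.n → K) : one ⟶ a :=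
  ofLinearMap (LinearMap.smulRight (LinearMap.proj 0) x)

@[simp]
lemma toLinearMap_ofVec {a : FreeModCat K} (x : Fin a.n → K)
    (t : Fin (one : FreeModCat K).n → K) :
    toLinearMap K (ofVec x) t = t 0 • x := rfl

lemma ofVec_comp {a b : FreeModCat K} (x : Fin a.n → K) (f : a ⟶ b) :
    ofVec x ≫ f = ofVec (toLinearMap K f x) := by
  ext t : 1
  rw [toLinearMap_comp, LinearMap.comp_apply, toLinearMap_ofVec, toLinearMap_ofVec, map_smul]

lemma eq_smul_one (t : Fin (one : FreeModCat K).n → K) : t = t 0 • 1 := by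
  ext i
  have hi : i = 0 := Fin.fin_one_eq_zero i
  rw [hi, Pi.smul_apply, Pi.one_apply, smul_eq_mul, mul_one]

lemma toLinearMap_apply_eq_smul {a : FreeModCat K} (g : one ⟶ a) (t : Fin one.n → K) :
    toLinearMap K g t = t 0 • toLinearMap K g 1 := by
  conv_lhs => rw [eq_smul_one t]
  exact map_smul _ _ _

def homOneEquiv (a : FreeModCat K) : (one ⟶ a) ≃+ (Fin a.n → K) where
  toFun g := toLinearMap K g 1
  invFun := ofVec
  left_inv g := by
    ext t : 1
    rw [toLinearMap_ofVec, toLinearMap_apply_eq_smul]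
  right_inv x := by dsimp only; rw [toLinearMap_ofVec, Pi.one_apply, one_smul]
  map_add' _ _ := rfl

def linearEquivOfIso {a b : FreeModCat K} (e : a ≅ b) : (Fin a.n → K) ≃ₗ[K] (Fin b.n → K) :=
  .ofLinearMap (toLinearMap K e.hom) (toLinearMap K e.inv)
    (congrArg (toLinearMap K) e.inv_hom_id) (congrArg (toLinearMap K) e.hom_inv_id)

section Semilinear

variable (F : FreeModCat K ⥤ FreeModCat K) [F.Full] [F.Faithful] [F.Additive]
  (e : one ≅ F.obj one)

noncomputable def semilinearEquiv (a : FreeModCat K) : (Fin a.n → K) ≃+ (Fin (F.obj a).n → K) :=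
  (homOneEquiv a).symm.trans <|
    (AddEquiv.ofBijective F.mapAddHom ⟨F.map_injective, F.map_surjective⟩).trans <|
    (AddEquiv.ofBijective (Preadditive.leftComp _ e.hom) e.symm.homFromEquiv.bijective).trans
      (homOneEquiv _)

lemma semilinearEquiv_apply {a : FreeModCat K} (x : Fin a.n → K) :
    semilinearEquiv F e a x = toLinearMap K (F.map (ofVec x)) (toLinearMap K e.hom 1) := rfl

lemma map_semilinearEquiv {a b : FreeModCat K} (f : a ⟶ b) (x : Fin a.n → K) :
    toLinearMap K (F.map f) (semilinearEquiv F e a x) =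
      semilinearEquiv F e b (toLinearMap K f x) := by
  rw [semilinearEquiv_apply, semilinearEquiv_apply, ← LinearMap.comp_apply, ← toLinearMap_comp,
    ← F.map_comp, ofVec_comp]

noncomputable def scalarAddEquiv : K ≃+ K :=
  ((LinearEquiv.funUnique (Fin 1) K K).symm.toAddEquiv.trans (semilinearEquiv F e one)).trans
    ((linearEquivOfIso e).symm.trans (LinearEquiv.funUnique (Fin 1) K K)).toAddEquiv

lemma scalarAddEquiv_apply (c : K) :
    scalarAddEquiv F e c = toLinearMap K e.inv (semilinearEquiv F e one fun _ => c) 0 := rfl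

lemma semilinearEquiv_one_const (c : K) :
    semilinearEquiv F e one (fun _ => c) = scalarAddEquiv F e c • toLinearMap K e.hom 1 := by
  rw [scalarAddEquiv_apply, ← toLinearMap_apply_eq_smul, ← LinearMap.comp_apply,
    ← toLinearMap_comp, e.inv_hom_id, toLinearMap_id, LinearMap.id_apply]

lemma semilinearEquiv_smul {a : FreeModCat K} (c : K) (x : Fin a.n → K) :
    semilinearEquiv F e a (c • x) = scalarAddEquiv F e c • semilinearEquiv F e a x :=
  calc semilinearEquiv F e a (c • x)
      _ = semilinearEquiv F e a (toLinearMap K (ofVec x) fun _ => c) := rfl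
      _ = toLinearMap K (F.map (ofVec x)) (semilinearEquiv F e one fun _ => c) :=
        (map_semilinearEquiv F e _ _).symm
      _ = scalarAddEquiv F e c • semilinearEquiv F e a x := by
        rw [semilinearEquiv_one_const, map_smul]; rfl

noncomputable def scalarRingEquiv : K ≃+* K :=
  { scalarAddEquiv F e with
    map_mul' c d := by
      change scalarAddEquiv F e (c * d) = scalarAddEquiv F e c * scalarAddEquiv F e d
      rw [scalarAddEquiv_apply, scalarAddEquiv_apply F e d]
      change toLinearMap K e.inv (semilinearEquiv F e one (c • fun _ => d)) 0 = _
      rw [semilinearEquiv_smul, map_smul]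
      rfl }

end Semilinear

end FreeModCat

/-- for a left noetherian ring `K`, every automorphism of the
category of finitely generated free left `K`-modules is semiinner. -/
theorem freeModCat_automorphism_semiinner [IsNoetherianRing K]
    (F : FreeModCat K ⥤ FreeModCat K)
    (h : ∃ G : FreeModCat K ⥤ FreeModCat K,
      F ⋙ G = 𝟭 (FreeModCat K) ∧ G ⋙ F = 𝟭 (FreeModCat K)) :
    ∃ (σ : K ≃+* K)
      (s : ∀ a : FreeModCat K, (Fin a.n → K) ≃+ (Fin (F.obj a).n → K)),
      (∀ (a : FreeModCat K) (c : K) (x : Fin a.n → K),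
          s a (c • x) = σ c • s a x) ∧
      (∀ (a b : FreeModCat K) (f : a ⟶ b) (x : Fin a.n → K),
          FreeModCat.toLinearMap K (F.map f) (s a x) =
            s b (FreeModCat.toLinearMap K f x)) := by
  obtain ⟨G, hFG, hGF⟩ := h
  have : F.IsEquivalence :=
    (CategoryTheory.Equivalence.mk F G (eqToIso hFG.symm) (eqToIso hGF)).isEquivalence_functor
  have : F.Additive := F.additive_of_isEquivalence
  obtain ⟨e⟩ := FreeModCat.nonempty_iso_obj_one F
  exact ⟨FreeModCat.scalarRingEquiv F e, FreeModCat.semilinearEquiv F e,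
    fun _ => FreeModCat.semilinearEquiv_smul F e, fun _ _ => FreeModCat.map_semilinearEquiv F e⟩
end

section
/- (Guba) Every free group of finite rank is geometrically noetherian: for all natural numbers n and m and every set T ⊆ FreeGroup (Fin n), there exists a finite subset T₀ ⊆ T such that every group homomorphism μ : FreeGroup (Fin n) →* FreeGroup (Fin m) with μ w = 1 for all w ∈ T₀ also satisfies μ w = 1 for all w ∈ T. -/
/-!
A homomorphism `FreeGroup (Fin n) →* GL d A` into a commutative ring `A` is the same as a ring
homomorphism out of the finitely generated `ℤ`-algebra `RepRing (Fin n) d`, the coordinate ring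
of the representation variety, and it solves `w = 1` exactly when it kills the ideal generated by
the entries of `univRep w - 1`. By the Hilbert basis theorem the ideal generated by a whole
system `T` is already generated by finitely many of these ideals, so `GL d A` is geometrically
noetherian. A ping-pong argument on the projective line embeds `FreeGroup (Fin m)` into
`GL 2 ℝ`, and geometric noetherianity passes to subgroups.
-/

open Matrix MvPolynomial Projectivization
open scoped LinearAlgebra.Projectivization Pointwise

def IsGeometricallyNoetherian (H : Type*) [Group H] : Prop :=
  ∀ (n : ℕ) (T : Set (FreeGroup (Fin n))), ∃ T₀ : Finset (FreeGroup (Fin n)), ↑T₀ ⊆ T ∧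
    ∀ μ : FreeGroup (Fin n) →* H, (∀ w ∈ T₀, μ w = 1) → ∀ w ∈ T, μ w = 1

theorem IsGeometricallyNoetherian.of_injective {H K : Type*} [Group H] [Group K] {φ : H →* K}
    (hφ : Function.Injective φ) (hK : IsGeometricallyNoetherian K) :
    IsGeometricallyNoetherian H := by
  intro n T
  obtain ⟨T₀, hT₀, h⟩ := hK n T
  refine ⟨T₀, hT₀, fun μ hμ w hw => hφ ?_⟩
  simpa using h (φ.comp μ) (fun w hw => by simp [hμ w hw]) w hw

namespace Matrix

variable {R S d : Type*} [CommRing R] [CommRing S] [DecidableEq d]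

def eqOneIdeal (M : Matrix d d R) : Ideal R :=
  Ideal.span (Set.range fun p : d × d => (M - 1) p.1 p.2)

theorem map_eq_one_iff_eqOneIdeal_le_ker (f : R →+* S) (M : Matrix d d R) :
    M.map f = 1 ↔ eqOneIdeal M ≤ RingHom.ker f := by
  have h : M.map f - 1 = (M - 1).map f := by simp [Matrix.map_sub]
  rw [eqOneIdeal, Ideal.span_le, Set.range_subset_iff, ← sub_eq_zero, h, ← Matrix.ext_iff]
  simp [Prod.forall]

end Matrix

namespace FreeGroup

variable (ι d : Type*) [Fintype d] [DecidableEq d]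

/-- `genericMatrix ι d k false` and `genericMatrix ι d k true` stand for the images of `of k` and
of its inverse. -/
noncomputable def genericMatrix (k : ι) (b : Bool) :
    Matrix d d (MvPolynomial (ι × Bool × d × d) ℤ) :=
  Matrix.of fun i j => X (k, b, i, j)

noncomputable def genericRelations : Ideal (MvPolynomial (ι × Bool × d × d) ℤ) :=
  ⨆ k, eqOneIdeal (genericMatrix ι d k false * genericMatrix ι d k true) ⊔
    eqOneIdeal (genericMatrix ι d k true * genericMatrix ι d k false)

abbrev RepRing := MvPolynomial (ι × Bool × d × d) ℤ ⧸ genericRelations ι d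

noncomputable def univRep : FreeGroup ι →* GL d (RepRing ι d) :=
  FreeGroup.lift fun k =>
    { val := (genericMatrix ι d k false).map (Ideal.Quotient.mk _)
      inv := (genericMatrix ι d k true).map (Ideal.Quotient.mk _)
      val_inv := by
        rw [← Matrix.map_mul, map_eq_one_iff_eqOneIdeal_le_ker, Ideal.mk_ker]
        exact le_iSup_of_le k le_sup_left
      inv_val := by
        rw [← Matrix.map_mul, map_eq_one_iff_eqOneIdeal_le_ker, Ideal.mk_ker]
        exact le_iSup_of_le k le_sup_right }

variable {ι d} {A : Type*} [CommRing A]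

noncomputable def evalRep (ν : FreeGroup ι →* GL d A) :
    MvPolynomial (ι × Bool × d × d) ℤ →+* A :=
  eval₂Hom (Int.castRingHom A) fun x => (cond x.2.1 (ν (of x.1))⁻¹ (ν (of x.1))) x.2.2.1 x.2.2.2

theorem map_genericMatrix_evalRep (ν : FreeGroup ι →* GL d A) (k : ι) (b : Bool) :
    (genericMatrix ι d k b).map (evalRep ν) = cond b (ν (of k))⁻¹ (ν (of k)) := by
  ext i j
  simp [genericMatrix, evalRep]

theorem genericRelations_le_ker_evalRep (ν : FreeGroup ι →* GL d A) :
    genericRelations ι d ≤ RingHom.ker (evalRep ν) := by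
  refine iSup_le fun k => sup_le ?_ ?_ <;>
    rw [← map_eq_one_iff_eqOneIdeal_le_ker, Matrix.map_mul, map_genericMatrix_evalRep,
      map_genericMatrix_evalRep] <;> simp

noncomputable def RepRing.lift (ν : FreeGroup ι →* GL d A) : RepRing ι d →+* A :=
  Ideal.Quotient.lift _ (evalRep ν) fun _ h => genericRelations_le_ker_evalRep ν h

theorem map_univRep_lift (ν : FreeGroup ι →* GL d A) (w : FreeGroup ι) :
    (univRep ι d w : Matrix d d (RepRing ι d)).map (RepRing.lift ν) = ν w := by
  suffices h : (Units.map (RepRing.lift ν).mapMatrix.toMonoidHom).comp (univRep ι d) = ν from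
    congr_arg Units.val (DFunLike.congr_fun h w)
  refine FreeGroup.ext_hom _ _ fun k => Units.ext ?_
  simp only [univRep, MonoidHom.comp_apply, FreeGroup.lift_apply_of, Units.coe_map]
  exact map_genericMatrix_evalRep ν k false

theorem eq_one_iff_eqOneIdeal_le_ker_lift (ν : FreeGroup ι →* GL d A) (w : FreeGroup ι) :
    ν w = 1 ↔
      eqOneIdeal (univRep ι d w : Matrix d d (RepRing ι d)) ≤ RingHom.ker (RepRing.lift ν) := by
  rw [← map_eq_one_iff_eqOneIdeal_le_ker, map_univRep_lift, Units.val_eq_one]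

end FreeGroup

open FreeGroup in
theorem isGeometricallyNoetherian_GL (d A : Type*) [Fintype d] [DecidableEq d] [CommRing A] :
    IsGeometricallyNoetherian (GL d A) := by
  intro n T
  let I : FreeGroup (Fin n) → Ideal (RepRing (Fin n) d) := fun w =>
    eqOneIdeal (univRep _ d w : Matrix d d _)
  have hI : IsCompactElement (⨆ w : T, I w) :=
    (Submodule.fg_iff_compact _).mp (IsNoetherian.noetherian _)
  obtain ⟨s, hs⟩ := CompleteLattice.IsCompactElement.exists_finset_of_le_iSup _ hI _ le_rfl
  refine ⟨s.map (Function.Embedding.subtype _), by simp, fun μ hμ w hw => ?_⟩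
  simp only [eq_one_iff_eqOneIdeal_le_ker_lift] at hμ ⊢
  refine (le_iSup (fun v : T => I v) ⟨w, hw⟩).trans (hs.trans (iSup₂_le fun v hv => hμ v ?_))
  exact Finset.mem_map_of_mem _ hv

/-- The lines of slope within `1/4` of `c`. -/
noncomputable def slopeCone (c : ℝ) : Set (ℙ ℝ (Fin 2 → ℝ)) :=
  {x | 4 * |x.rep 1 - c * x.rep 0| ≤ |x.rep 0|}

theorem mk_mem_slopeCone {c : ℝ} {v : Fin 2 → ℝ} (hv : v ≠ 0) :
    mk ℝ v hv ∈ slopeCone c ↔ 4 * |v 1 - c * v 0| ≤ |v 0| := by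
  obtain ⟨a, ha⟩ := exists_smul_eq_mk_rep ℝ v hv
  rw [slopeCone, Set.mem_ofPred_eq, ← ha]
  simp only [Units.smul_def, Pi.smul_apply, smul_eq_mul]
  rw [show a * v 1 - c * (a * v 0) = a * (v 1 - c * v 0) by ring, abs_mul, abs_mul, mul_left_comm,
    mul_le_mul_iff_right₀ (abs_pos.mpr a.ne_zero)]

theorem slopeCone_nonempty (c : ℝ) : (slopeCone c).Nonempty :=
  ⟨mk ℝ ![1, c] (by simp), by simp [mk_mem_slopeCone]⟩

theorem disjoint_slopeCone {c c' : ℝ} (h : 1 ≤ |c - c'|) :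
    Disjoint (slopeCone c) (slopeCone c') := by
  refine Set.disjoint_left.mpr fun x hx hx' => ?_
  induction x using Projectivization.ind with | h v hv => ?_
  rw [mk_mem_slopeCone] at hx hx'
  have h0 : v 0 = 0 := by
    have : |c - c'| * |v 0| ≤ |v 0| / 2 := by
      calc |c - c'| * |v 0| = |(v 1 - c' * v 0) - (v 1 - c * v 0)| := by rw [← abs_mul]; ring_nf
        _ ≤ |v 1 - c' * v 0| + |v 1 - c * v 0| := abs_sub _ _
        _ ≤ |v 0| / 2 := by linarith
    by_contra h0
    nlinarith [abs_pos.mpr h0]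
  have h1 : 4 * |v 1| ≤ 0 := by simpa [h0] using hx
  exact hv (funext (Fin.forall_fin_two.mpr ⟨h0, abs_eq_zero.mp (by linarith [abs_nonneg (v 1)])⟩))

theorem four_mul_abs_le_of_abs_add_lt {a b : ℝ} (h : |a + b| < 4 * |a|) :
    4 * |b| ≤ |32 * a + b| := by
  have hb : |b| ≤ |a + b| + |a| := by simpa using abs_sub (a + b) a
  have ha : |32 * a| ≤ |32 * a + b| + |b| := by simpa using abs_sub (32 * a + b) b
  rw [abs_mul, abs_of_pos (by norm_num : (0 : ℝ) < 32)] at ha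
  linarith [abs_nonneg a]

noncomputable def pingMatrix (t : ℝ) : GL (Fin 2) ℝ where
  val := !![31 * t + 32, -31; 31 * t * (t + 1), -31 * t + 1]
  inv := (32 : ℝ)⁻¹ • !![-31 * t + 1, 31; -31 * t * (t + 1), 31 * t + 32]
  val_inv := by ext i j; fin_cases i <;> fin_cases j <;> simp [Matrix.mul_apply] <;> ring
  inv_val := by ext i j; fin_cases i <;> fin_cases j <;> simp [Matrix.mul_apply] <;> ring

theorem pingMatrix_smul_eigen (t a b : ℝ) :
    pingMatrix t • ![a + b, a * t + b * (t + 1)] = ![32 * a + b, 32 * a * t + b * (t + 1)] := by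
  ext i; fin_cases i <;> simp [pingMatrix] <;> ring

theorem pingMatrix_inv_smul_eigen (t a b : ℝ) :
    (pingMatrix t)⁻¹ • ![a + b, a * t + b * (t + 1)] =
      ![a / 32 + b, a / 32 * t + b * (t + 1)] := by
  ext i; fin_cases i <;> simp [pingMatrix] <;> ring

theorem exists_eq_eigen (t : ℝ) (v : Fin 2 → ℝ) :
    ∃ a b : ℝ, v = ![a + b, a * t + b * (t + 1)] :=
  ⟨(t + 1) * v 0 - v 1, v 1 - t * v 0, by ext i; fin_cases i <;> simp <;> ring⟩

theorem pingMatrix_smul_compl_subset (t : ℝ) :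
    pingMatrix t • (slopeCone (t + 1))ᶜ ⊆ slopeCone t := by
  refine Set.smul_set_subset_iff.mpr fun x hx => ?_
  induction x using Projectivization.ind with | h v hv => ?_
  obtain ⟨a, b, rfl⟩ := exists_eq_eigen t v
  rw [Set.mem_compl_iff, mk_mem_slopeCone, not_le] at hx
  simp only [smul_mk, pingMatrix_smul_eigen, mk_mem_slopeCone, cons_val_zero, cons_val_one] at hx ⊢
  rw [show a * t + b * (t + 1) - (t + 1) * (a + b) = -a by ring, abs_neg] at hx
  rw [show 32 * a * t + b * (t + 1) - t * (32 * a + b) = b by ring]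
  exact four_mul_abs_le_of_abs_add_lt hx

theorem pingMatrix_inv_smul_compl_subset (t : ℝ) :
    (pingMatrix t)⁻¹ • (slopeCone t)ᶜ ⊆ slopeCone (t + 1) := by
  refine Set.smul_set_subset_iff.mpr fun x hx => ?_
  induction x using Projectivization.ind with | h v hv => ?_
  obtain ⟨a, b, rfl⟩ := exists_eq_eigen t v
  rw [Set.mem_compl_iff, mk_mem_slopeCone, not_le] at hx
  simp only [smul_mk, pingMatrix_inv_smul_eigen, mk_mem_slopeCone, cons_val_zero, cons_val_one] at hx ⊢
  rw [show a * t + b * (t + 1) - t * (a + b) = b by ring, add_comm] at hx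
  rw [show a / 32 * t + b * (t + 1) - (t + 1) * (a / 32 + b) = -(a / 32) by ring, abs_neg,
    show a / 32 + b = (32 * b + a) / 32 by ring, abs_div, abs_div,
    abs_of_pos (by norm_num : (0 : ℝ) < 32)]
  linarith [four_mul_abs_le_of_abs_add_lt hx]

theorem disjoint_slopeCone_natCast {m n : ℕ} (h : m ≠ n) :
    Disjoint (slopeCone m) (slopeCone n) := by
  have : (1 : ℤ) ≤ |(m : ℤ) - n| := Int.one_le_abs (by omega)
  exact disjoint_slopeCone (by exact_mod_cast this)

theorem injective_lift_pingMatrix :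
    Function.Injective (FreeGroup.lift fun k : ℕ => pingMatrix (2 * k : ℕ)) := by
  refine FreeGroup.injective_lift_of_ping_pong _ (fun k => slopeCone (2 * k : ℕ))
    (fun k => slopeCone (2 * k + 1 : ℕ)) (fun k => slopeCone_nonempty _)
    (fun j k h => disjoint_slopeCone_natCast (by omega))
    (fun j k h => disjoint_slopeCone_natCast (by omega))
    (fun j k => disjoint_slopeCone_natCast (by omega))
    (fun k => ?_) (fun k => ?_)
  · simpa only [Nat.cast_succ] using pingMatrix_smul_compl_subset _
  · simpa only [Pi.inv_apply, Nat.cast_succ] using pingMatrix_inv_smul_compl_subset _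

theorem FreeGroup.exists_injective_hom_GL_two_real (ι : Type*) [Countable ι] :
    ∃ φ : FreeGroup ι →* GL (Fin 2) ℝ, Function.Injective φ := by
  obtain ⟨f, hf⟩ := Countable.exists_injective_nat ι
  exact ⟨(FreeGroup.lift _).comp (FreeGroup.map f),
    injective_lift_pingMatrix.comp (FreeGroup.map_injective hf)⟩

/-- Guba: every free group of finite rank is geometrically
noetherian: every system of equations `{w = 1 : w ∈ T}` over a free group of
finite rank is equivalent, over any free group of finite rank, to a finite
subsystem. -/
theorem freeGroup_geometrically_noetherian (n m : ℕ)
    (T : Set (FreeGroup (Fin n))) :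
    ∃ T₀ : Finset (FreeGroup (Fin n)), ↑T₀ ⊆ T ∧
      ∀ μ : FreeGroup (Fin n) →* FreeGroup (Fin m),
        (∀ w ∈ T₀, μ w = 1) → ∀ w ∈ T, μ w = 1 := by
  obtain ⟨φ, hφ⟩ := FreeGroup.exists_injective_hom_GL_two_real (Fin m)
  exact (isGeometricallyNoetherian_GL (Fin 2) ℝ).of_injective hφ n T
end
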